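/- Let 1 < p < 2 ≤ n with p < 2n/(n+1), let 0 < l ≤ p, and set β = 1/(2-p) and δ = n - (βl+1)(p-1) - 1. Then δ > 0, and there exists C > 0 (namely C = (β / (δ(βl)^{p-1}))^{1/(p-2)}) such that the function u(x,t) = C((-t)/|x|^l)^β satisfies the pointwise classical supersolution inequality ∂_t u(x,t) - Δ_p u(x,t) ≥ 0 at every point (x,t) with 0 < -t < |x|^l and |x| < 1. -/

import Mathlib

open MeasureTheory Real Set

/-- Classical divergence of a vector field on ℝⁿ. -/
noncomputable def divergence (n : ℕ)
    (F : EuclideanSpace ℝ (Fin n) → EuclideanSpace ℝ (Fin n))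
    (x : EuclideanSpace ℝ (Fin n)) : ℝ :=
  ∑ i, (inner ℝ (fderiv ℝ F x (EuclideanSpace.single i 1)) (EuclideanSpace.single i 1) : ℝ)

/-- The p-Laplacian Δ_p u = div(|∇u|^{p-2} ∇u), computed classically. -/
noncomputable def pLap (n : ℕ) (p : ℝ) (u : EuclideanSpace ℝ (Fin n) → ℝ)
    (x : EuclideanSpace ℝ (Fin n)) : ℝ :=
  divergence n (fun y => ‖gradient u y‖ ^ (p - 2) • gradient u y) x

/-! Freezing time, the profile is a radial power `C (-t)^β ‖x‖^(-βl)`, whose `p`-Laplacian is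
explicit. Because `β (p - 2) = -1`, `∂ₜu` and `Δₚu` carry the same power of `-t`, and `C` is
chosen so that `Δₚu = ∂ₜu · ‖x‖^(l-p)`. Since `∂ₜu ≤ 0` and `‖x‖^(l-p) ≥ 1` on the unit ball,
`∂ₜu - Δₚu ≥ 0`. -/

section RadialCalculus

variable {E : Type*} [NormedAddCommGroup E] [InnerProductSpace ℝ E]

theorem hasFDerivAt_norm_rpow_of_ne_zero (a : ℝ) {x : E} (hx : x ≠ 0) :
    HasFDerivAt (fun y : E => ‖y‖ ^ a) ((a * ‖x‖ ^ (a - 2)) • innerSL ℝ x) x := by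
  have hnx : 0 < ‖x‖ := norm_pos_iff.2 hx
  have hsq : ∀ y : E, ‖y‖ ^ a = (‖y‖ ^ 2) ^ (a / 2) := fun y => by
    rw [← Real.rpow_natCast, ← Real.rpow_mul (norm_nonneg y)]; ring_nf
  simp_rw [hsq]
  convert (hasStrictFDerivAt_norm_sq x).hasFDerivAt.rpow_const
    (Or.inl (pow_pos hnx 2).ne') using 1
  rw [← Nat.cast_smul_eq_nsmul ℝ, smul_smul, ← Real.rpow_natCast, ← Real.rpow_mul hnx.le]
  congr 1
  push_cast; ring_nf

theorem hasGradientAt_const_mul_norm_rpow [CompleteSpace E] (A a : ℝ) {x : E} (hx : x ≠ 0) :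
    HasGradientAt (fun y : E => A * ‖y‖ ^ a) ((A * a * ‖x‖ ^ (a - 2)) • x) x := by
  rw [hasGradientAt_iff_hasFDerivAt]
  refine ((hasFDerivAt_norm_rpow_of_ne_zero a hx).const_mul A).congr_fderiv ?_
  ext v
  simp only [InnerProductSpace.toDual_apply_apply, smul_apply,
    innerSL_apply_apply, real_inner_smul_left, smul_eq_mul]
  ring

theorem hasFDerivAt_norm_rpow_smul_self (k m : ℝ) {x : E} (hx : x ≠ 0) :
    HasFDerivAt (fun y : E => (k * ‖y‖ ^ m) • y)
      ((k * ‖x‖ ^ m) • ContinuousLinearMap.id ℝ E +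
        ((k * m * ‖x‖ ^ (m - 2)) • innerSL ℝ x).smulRight x) x := by
  have h := ((hasFDerivAt_norm_rpow_of_ne_zero m hx).const_mul k).smul (hasFDerivAt_id x)
  rwa [smul_smul, ← mul_assoc] at h

end RadialCalculus

theorem divergence_congr {n : ℕ} {F G : EuclideanSpace ℝ (Fin n) → EuclideanSpace ℝ (Fin n)}
    {x : EuclideanSpace ℝ (Fin n)} (h : F =ᶠ[nhds x] G) :
    divergence n F x = divergence n G x := by
  rw [divergence, divergence, h.fderiv_eq]

theorem divergence_norm_rpow_smul_self (n : ℕ) (k m : ℝ) {x : EuclideanSpace ℝ (Fin n)}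
    (hx : x ≠ 0) :
    divergence n (fun y => (k * ‖y‖ ^ m) • y) x = k * ((n : ℝ) + m) * ‖x‖ ^ m := by
  have hnx : 0 < ‖x‖ := norm_pos_iff.2 hx
  have hdiag : ∀ i, (inner ℝ (fderiv ℝ (fun y => (k * ‖y‖ ^ m) • y) x
      (EuclideanSpace.single i 1)) (EuclideanSpace.single i (1 : ℝ)) : ℝ)
      = k * ‖x‖ ^ m + k * m * ‖x‖ ^ (m - 2) * x i ^ 2 := fun i => by
    simp [(hasFDerivAt_norm_rpow_smul_self k m hx).fderiv, inner_add_left,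
      EuclideanSpace.inner_single_right]
    ring
  have hsq : ∑ i, x i ^ 2 = ‖x‖ ^ (2 : ℝ) := by
    rw [Real.rpow_two, EuclideanSpace.norm_sq_eq]; simp
  rw [divergence, Finset.sum_congr rfl fun i _ => hdiag i, Finset.sum_add_distrib,
    Finset.sum_const, Finset.card_univ, Fintype.card_fin, nsmul_eq_mul, ← Finset.mul_sum, hsq,
    mul_assoc _ (‖x‖ ^ (m - 2)), ← Real.rpow_add hnx, sub_add_cancel]
  ring

theorem pLap_const_mul_norm_rpow (n : ℕ) (p : ℝ) {A e : ℝ} (hAe : A * e < 0)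
    {x : EuclideanSpace ℝ (Fin n)} (hx : x ≠ 0) :
    pLap n p (fun y => A * ‖y‖ ^ e) x
      = -(-(A * e)) ^ (p - 1) * ((n : ℝ) + ((e - 1) * (p - 1) - 1))
          * ‖x‖ ^ ((e - 1) * (p - 1) - 1) := by
  have hflux : (fun y => ‖gradient (fun y => A * ‖y‖ ^ e) y‖ ^ (p - 2)
        • gradient (fun y : EuclideanSpace ℝ (Fin n) => A * ‖y‖ ^ e) y)
      =ᶠ[nhds x] fun y => (-(-(A * e)) ^ (p - 1) * ‖y‖ ^ ((e - 1) * (p - 1) - 1)) • y := by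
    filter_upwards [eventually_ne_nhds hx] with y hy
    have hny : 0 < ‖y‖ := norm_pos_iff.2 hy
    have hgrad_norm : ‖(A * e * ‖y‖ ^ (e - 2)) • y‖ = -(A * e) * ‖y‖ ^ (e - 1) := by
      rw [norm_smul, Real.norm_eq_abs, abs_of_neg (mul_neg_of_neg_of_pos hAe (by positivity)),
        show e - 1 = (e - 2) + 1 by ring, Real.rpow_add_one hny.ne']
      ring
    rw [(hasGradientAt_const_mul_norm_rpow A e hy).gradient, hgrad_norm, smul_smul,
      Real.mul_rpow (by linarith) (by positivity), ← Real.rpow_mul hny.le]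
    congr 1
    rw [show p - 1 = (p - 2) + 1 by ring, Real.rpow_add_one (by linarith),
      show (e - 1) * (p - 2 + 1) - 1 = (e - 1) * (p - 2) + (e - 2) by ring, Real.rpow_add hny]
    ring
  rw [pLap, divergence_congr hflux, divergence_norm_rpow_smul_self n _ _ hx]

theorem Real.rpow_one_div_rpow_add_one {a q : ℝ} (ha : 0 < a) (hq : q ≠ 0) :
    (a ^ (1 / q)) ^ (q + 1) = a * a ^ (1 / q) := by
  rw [Real.rpow_add_one (Real.rpow_pos_of_pos ha _).ne', ← Real.rpow_mul ha.le,
    one_div_mul_cancel hq, Real.rpow_one]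

theorem hasDerivAt_soda_profile (C β : ℝ) {r l t : ℝ} (hr : 0 < r) (ht : 0 < -t) :
    HasDerivAt (fun s => C * ((-s) / r ^ l) ^ β)
      (-(C * β) * (-t) ^ (β - 1) * r ^ (-(l * β))) t := by
  have hrl : 0 < r ^ l := Real.rpow_pos_of_pos hr l
  have h := (((hasDerivAt_neg t).div_const (r ^ l)).rpow_const (p := β)
    (Or.inl (div_pos ht hrl).ne')).const_mul C
  refine h.congr_deriv ?_
  rw [Real.div_rpow ht.le hrl.le, Real.rpow_neg hr.le, Real.rpow_mul hr.le,
    Real.rpow_sub_one hrl.ne']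
  field_simp

theorem soda_profile_eq {E : Type*} [NormedAddCommGroup E] (C : ℝ) {β l t : ℝ} (hβ : 0 < β)
    (hl : 0 < l) (ht : 0 ≤ -t) :
    (fun y : E => C * ((-t) / ‖y‖ ^ l) ^ β) = fun y => C * (-t) ^ β * ‖y‖ ^ (-(l * β)) := by
  funext y
  rcases eq_or_ne y 0 with rfl | hy
  · simp [Real.zero_rpow hl.ne', Real.zero_rpow hβ.ne', (mul_pos hl hβ).ne']
  · rw [Real.div_rpow ht (Real.rpow_nonneg (norm_nonneg y) l), Real.rpow_neg (norm_nonneg y),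
      ← Real.rpow_mul (norm_nonneg y)]
    ring

theorem pLap_soda_profile {n : ℕ} {p C β l t : ℝ} (hβp : β * (2 - p) = 1) (hβ : 0 < β)
    (hC : 0 < C) (hl : 0 < l) (ht : 0 < -t) {x : EuclideanSpace ℝ (Fin n)} (hx : x ≠ 0) :
    pLap n p (fun y => C * ((-t) / ‖y‖ ^ l) ^ β) x
      = -(C ^ (p - 1) * (β * l) ^ (p - 1) * ((n : ℝ) - (β * l + 1) * (p - 1) - 1))
          * (-t) ^ (β - 1) * ‖x‖ ^ (-(l * β)) * ‖x‖ ^ (l - p) := by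
  have hnx : 0 < ‖x‖ := norm_pos_iff.2 hx
  have hAe : C * (-t) ^ β * -(l * β) < 0 :=
    mul_neg_of_pos_of_neg (by positivity) (neg_neg_of_pos (mul_pos hl hβ))
  rw [soda_profile_eq C hβ hl ht.le, pLap_const_mul_norm_rpow n p hAe hx,
    show -(C * (-t) ^ β * -(l * β)) = C * (β * l) * (-t) ^ β by ring,
    Real.mul_rpow (by positivity) (by positivity), Real.mul_rpow hC.le (by positivity),
    ← Real.rpow_mul ht.le, show β * (p - 1) = β - 1 by linear_combination -hβp,
    show (n : ℝ) + ((-(l * β) - 1) * (p - 1) - 1) = n - (β * l + 1) * (p - 1) - 1 by ring,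
    show (-(l * β) - 1) * (p - 1) - 1 = -(l * β) + (l - p) by linear_combination l * hβp,
    Real.rpow_add hnx]
  ring

theorem lt_two_of_lt_two_mul_div {n : ℕ} {p : ℝ} (hp : p < 2 * n / (n + 1)) : p < 2 := by
  rw [lt_div_iff₀ (by positivity)] at hp
  nlinarith

theorem soda_can_exponent_pos {n : ℕ} {p l : ℝ} (hp1 : 1 < p) (hp2 : p < 2 * n / (n + 1))
    (hlp : l ≤ p) : 0 < (n : ℝ) - (1 / (2 - p) * l + 1) * (p - 1) - 1 := by
  have h2p : 0 < 2 - p := sub_pos.2 (lt_two_of_lt_two_mul_div hp2)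
  rw [lt_div_iff₀ (by positivity)] at hp2
  have hscaled : (2 - p) * ((n : ℝ) - (1 / (2 - p) * l + 1) * (p - 1) - 1)
      = n * (2 - p) - l * (p - 1) - p * (2 - p) := by
    field_simp
    ring
  refine pos_of_mul_pos_right (hscaled ▸ ?_) h2p.le
  nlinarith [mul_le_mul_of_nonneg_right hlp (sub_nonneg.2 hp1.le)]

theorem soda_can_constant_spec {n : ℕ} {p β l C : ℝ} (hp : p ≠ 2) (hβ : 0 < β) (hl : 0 < l)
    (hδ : 0 < (n : ℝ) - (β * l + 1) * (p - 1) - 1)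
    (hC : C = (β / (((n : ℝ) - (β * l + 1) * (p - 1) - 1) * (β * l) ^ (p - 1))) ^ (1 / (p - 2))) :
    C ^ (p - 1) * (β * l) ^ (p - 1) * ((n : ℝ) - (β * l + 1) * (p - 1) - 1) = C * β := by
  have hD : 0 < ((n : ℝ) - (β * l + 1) * (p - 1) - 1) * (β * l) ^ (p - 1) := by positivity
  have hCp :
      C ^ (p - 1) = β / (((n : ℝ) - (β * l + 1) * (p - 1) - 1) * (β * l) ^ (p - 1)) * C := by
    have h := Real.rpow_one_div_rpow_add_one (div_pos hβ hD) (sub_ne_zero.2 hp)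
    rwa [show p - 2 + 1 = p - 1 by ring, ← hC] at h
  rw [hCp]
  field_simp

theorem soda_can_supersolution_singular_general (n : ℕ) (p l : ℝ)
    (hp1 : 1 < p) (hp2 : p < 2 * (n : ℝ) / ((n : ℝ) + 1))
    (hl0 : 0 < l) (hlp : l ≤ p) :
    0 < (n : ℝ) - (1 / (2 - p) * l + 1) * (p - 1) - 1 ∧
    ∃ C : ℝ, 0 < C ∧
      C = ((1 / (2 - p)) /
            (((n : ℝ) - (1 / (2 - p) * l + 1) * (p - 1) - 1) *
              ((1 / (2 - p)) * l) ^ (p - 1))) ^ (1 / (p - 2)) ∧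
      ∀ (x : EuclideanSpace ℝ (Fin n)) (t : ℝ),
        0 < -t → -t < ‖x‖ ^ l → ‖x‖ < 1 →
        0 ≤ deriv (fun s => C * ((-s) / ‖x‖ ^ l) ^ (1 / (2 - p))) t
              - pLap n p (fun y => C * ((-t) / ‖y‖ ^ l) ^ (1 / (2 - p))) x := by
  have h2p : 0 < 2 - p := sub_pos.2 (lt_two_of_lt_two_mul_div hp2)
  set β := 1 / (2 - p)
  have hβ : 0 < β := by positivity
  have hβp : β * (2 - p) = 1 := one_div_mul_cancel h2p.ne'
  have hδ := soda_can_exponent_pos hp1 hp2 hlp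
  set C := (β / (((n : ℝ) - (β * l + 1) * (p - 1) - 1) * (β * l) ^ (p - 1))) ^ (1 / (p - 2))
    with hC_def
  have hC : 0 < C := Real.rpow_pos_of_pos (by positivity) _
  refine ⟨hδ, C, hC, rfl, fun x t ht htx hx1 => ?_⟩
  have hx : x ≠ 0 := by
    rintro rfl
    rw [norm_zero, Real.zero_rpow hl0.ne'] at htx
    exact htx.not_gt ht
  rw [(hasDerivAt_soda_profile C β (norm_pos_iff.2 hx) ht).deriv,
    pLap_soda_profile hβp hβ hC hl0 ht hx,
    soda_can_constant_spec (by linarith) hβ hl0 hδ hC_def]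
  have hone_le : 1 ≤ ‖x‖ ^ (l - p) :=
    Real.one_le_rpow_of_pos_of_le_one_of_nonpos (norm_pos_iff.2 hx) hx1.le (by linarith)
  have hcoeff : 0 ≤ C * β * (-t) ^ (β - 1) * ‖x‖ ^ (-(l * β)) := by positivity
  nlinarith

theorem soda_can_supersolution_singular (n : ℕ) (p l : ℝ) (hn : 2 ≤ n)
    (hp1 : 1 < p) (hp2 : p < 2 * (n : ℝ) / ((n : ℝ) + 1))
    (hl0 : 0 < l) (hlp : l ≤ p) :
    0 < (n : ℝ) - (1 / (2 - p) * l + 1) * (p - 1) - 1 ∧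
    ∃ C : ℝ, 0 < C ∧
      C = ((1 / (2 - p)) /
            (((n : ℝ) - (1 / (2 - p) * l + 1) * (p - 1) - 1) *
              ((1 / (2 - p)) * l) ^ (p - 1))) ^ (1 / (p - 2)) ∧
      ∀ (x : EuclideanSpace ℝ (Fin n)) (t : ℝ),
        0 < -t → -t < ‖x‖ ^ l → ‖x‖ < 1 →
        0 ≤ deriv (fun s => C * ((-s) / ‖x‖ ^ l) ^ (1 / (2 - p))) t
              - pLap n p (fun y => C * ((-t) / ‖y‖ ^ l) ^ (1 / (2 - p))) x :=
  soda_can_supersolution_singular_general n p l hp1 hp2 hl0 hlp
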